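/- For nonzero complex numbers Z and W, if |Z - W| ≤ δ < |W|, then the angular distance between arg(Z) and arg(W) satisfies sin(d(arg Z, arg W)) ≤ δ/|W|, and hence d(arg Z, arg W) ≤ arcsin(δ/|W|). -/

import Mathlib

/-!
Put `z = Z / W`. Then `‖z - 1‖ ≤ δ / ‖W‖ < 1`, and `arg Z - arg W ≡ arg z` modulo `2π` with
`|arg z| ≤ π`, so the angular distance is `|arg z|`. Since `‖z - 1‖` is at least the distance from
`1` to the line `ℝ z`, which is `|sin (arg z)|`, we get `sin |arg z| ≤ δ / ‖W‖`; and `‖z - 1‖ < 1`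
forces `re z > 0`, so `|arg z| < π / 2` lies in the range where `arcsin` inverts `sin`.
-/

open Complex

/-- Distance between two angles on the circle `ℝ / 2πℤ`. -/
noncomputable def circleDist (θ φ : ℝ) : ℝ := ⨅ k : ℤ, |θ - φ + 2 * (k : ℝ) * Real.pi|

open Real

theorem circleDist_eq_norm_coe (θ φ : ℝ) : circleDist θ φ = ‖((θ - φ : ℝ) : Angle)‖ := by
  refine le_antisymm ?_ (le_ciInf fun k => ?_)
  · refine (ciInf_le ⟨0, by rintro _ ⟨k, rfl⟩; positivity⟩
      (-round ((2 * π)⁻¹ * (θ - φ)))).trans_eq ?_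
    rw [show ‖((θ - φ : ℝ) : Angle)‖ = _ from AddCircle.norm_eq (2 * π)]
    push_cast
    ring_nf
  · calc ‖((θ - φ : ℝ) : Angle)‖ = ‖((θ - φ + 2 * k * π : ℝ) : Angle)‖ := by
          rw [show 2 * k * π = k * (2 * π) by ring, Angle.coe_add, Angle.intCast_mul_eq_zsmul,
            Angle.coe_two_pi, smul_zero, add_zero]
      _ ≤ |θ - φ + 2 * k * π| := QuotientAddGroup.norm_mk_le_norm

theorem circleDist_arg_eq_abs_arg_div {Z W : ℂ} (hZ : Z ≠ 0) (hW : W ≠ 0) :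
    circleDist Z.arg W.arg = |(Z / W).arg| := by
  rw [circleDist_eq_norm_coe, Angle.coe_sub, ← arg_div_coe_angle hZ hW]
  refine (AddCircle.norm_coe_eq_abs_iff _ two_pi_pos.ne').mpr ?_
  rw [abs_of_pos two_pi_pos, mul_div_cancel_left₀ _ two_ne_zero]
  exact abs_arg_le_pi _

theorem Complex.abs_sin_arg_le_norm_sub_one (z : ℂ) : |Real.sin z.arg| ≤ ‖z - 1‖ := by
  rcases eq_or_ne z 0 with rfl | hz
  · simp
  rw [sin_arg, abs_div, abs_norm, div_le_iff₀ (norm_pos_iff.mpr hz)]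
  refine abs_le_of_sq_le_sq ?_ (by positivity)
  rw [mul_pow, Complex.sq_norm, Complex.sq_norm, normSq_apply, normSq_apply]
  simp only [sub_re, sub_im, one_re, one_im]
  -- `‖z‖² ‖z - 1‖² - (im z)² = (‖z‖² - re z)²`
  nlinarith [sq_nonneg (z.re * z.re + z.im * z.im - z.re)]

theorem Complex.abs_arg_lt_pi_div_two_of_norm_sub_one_lt {z : ℂ} (hz : ‖z - 1‖ < 1) :
    |z.arg| < π / 2 := by
  refine abs_arg_lt_pi_div_two_iff.mpr (Or.inl ?_)
  have := (abs_re_le_norm (z - 1)).trans_lt hz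
  rw [sub_re, one_re, abs_lt] at this
  linarith

theorem arg_close_of_close_general (Z W : ℂ) (δ : ℝ)
    (h : ‖Z - W‖ ≤ δ) (hδ : δ < ‖W‖) :
    Real.sin (circleDist Z.arg W.arg) ≤ δ / ‖W‖ ∧
    circleDist Z.arg W.arg ≤ Real.arcsin (δ / ‖W‖) := by
  have hW₀ : 0 < ‖W‖ := ((norm_nonneg _).trans h).trans_lt hδ
  have hW : W ≠ 0 := norm_pos_iff.mp hW₀
  have hZ : Z ≠ 0 := by rintro rfl; rw [zero_sub, norm_neg] at h; linarith
  have hz : ‖Z / W - 1‖ ≤ δ / ‖W‖ := by rw [div_sub_one hW, norm_div]; gcongr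
  have hsin : Real.sin |(Z / W).arg| ≤ δ / ‖W‖ := by
    rw [← abs_sin_eq_sin_abs_of_abs_le_pi (abs_arg_le_pi _)]
    exact (abs_sin_arg_le_norm_sub_one _).trans hz
  have harg : |(Z / W).arg| < π / 2 :=
    abs_arg_lt_pi_div_two_of_norm_sub_one_lt (hz.trans_lt ((div_lt_one hW₀).mpr hδ))
  rw [circleDist_arg_eq_abs_arg_div hZ hW]
  refine ⟨hsin, (le_arcsin_iff_sin_le' ⟨?_, harg.le⟩).mpr hsin⟩
  linarith [abs_nonneg (Z / W).arg, pi_pos]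

/-- For nonzero complex `Z, W` with `|Z - W| ≤ δ < |W|`, the angular distance between their
arguments satisfies `sin (d(arg Z, arg W)) ≤ δ/|W|` and `d(arg Z, arg W) ≤ arcsin (δ/|W|)`. -/
theorem arg_close_of_close (Z W : ℂ) (hZ : Z ≠ 0) (hW : W ≠ 0) (δ : ℝ)
    (h : ‖Z - W‖ ≤ δ) (hδ : δ < ‖W‖) :
    Real.sin (circleDist Z.arg W.arg) ≤ δ / ‖W‖ ∧
    circleDist Z.arg W.arg ≤ Real.arcsin (δ / ‖W‖) :=
  arg_close_of_close_general Z W δ h hδ
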